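/- Let N ≥ 2 and let V₁, …, Vₙ (n ≥ 2) be pairwise disjoint nonempty subsets of ℤ/N, pairwise non-crossing in the sense that for all i ≠ j, V_j lies in a single cyclic interval component of (ℤ/N) \ V_i. For each i let ν(i) be the maximal cardinality of a subset M ⊆ {1,…,n} \ {i} such that ⋃_{j ∈ M} V_j lies in a single cyclic interval component of (ℤ/N) \ V_i. If ν(i) < n − 1 for some i, then there exists i' ≠ i with ν(i') ≥ ν(i) + 1. -/

import Mathlib

/-!
Unroll the cycle at a point `v ∈ V i`: every interval avoiding `V i` becomes an honest interval of
positions `(x - v).val` inside `[1, N - 1]`. Take a maximal family `M` for `i`, with interval `I₁`,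
and some `j ∉ M ∪ {i}`, with `V j` inside an interval `I₂` avoiding `V i`. If the unrolled
`I₁` and `I₂` overlap or touch, their union is an interval avoiding `V i` that contains `M ∪ {j}`,
contradicting maximality. Otherwise `I₁` and `I₂` are disjoint, and the complementary interval of
`I₂` avoids `V j` and contains both `V i` and `I₁`, so `M ∪ {i}` witnesses `ν j ≥ ν i + 1`.
-/

/-- `S` is contained in a single cyclic-interval component of the complement of `V`
in the cycle `ℤ/N`: there is a run of cyclically consecutive elements avoiding `V`
which contains `S`. -/
def InOneComponent (N : ℕ) (V S : Set (ZMod N)) : Prop :=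
  ∃ (a : ZMod N) (k : ℕ),
    (∀ i ≤ k, (a + (i : ZMod N)) ∉ V) ∧
    S ⊆ {x : ZMod N | ∃ i ≤ k, x = a + (i : ZMod N)}

namespace ZMod

variable {N : ℕ}

def cycInterval (a : ZMod N) (k : ℕ) : Set (ZMod N) :=
  {x | ∃ t ≤ k, x = a + (t : ZMod N)}

theorem inOneComponent_iff {V S : Set (ZMod N)} :
    InOneComponent N V S ↔ ∃ a k, Disjoint (cycInterval a k) V ∧ S ⊆ cycInterval a k := by
  simp only [InOneComponent, cycInterval, Set.disjoint_left, Set.mem_ofPred_eq]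
  refine exists₂_congr fun a k => and_congr_left' ⟨fun h x ⟨t, ht, hx⟩ => hx ▸ h t ht,
    fun h t ht => h ⟨t, ht, rfl⟩⟩

variable [NeZero N]

theorem mem_cycInterval_add_iff {v x : ZMod N} {s k : ℕ} (h : s + k < N) :
    x ∈ cycInterval (v + (s : ZMod N)) k ↔ s ≤ (x - v).val ∧ (x - v).val ≤ s + k := by
  constructor
  · rintro ⟨t, ht, rfl⟩
    rw [add_assoc, add_sub_cancel_left, ← Nat.cast_add, val_cast_of_lt (by omega)]
    omega
  · rintro ⟨hs, hsk⟩
    refine ⟨(x - v).val - s, by omega, ?_⟩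
    rw [add_assoc, ← Nat.cast_add, Nat.add_sub_cancel' hs, natCast_zmod_val, add_sub_cancel]

theorem mem_cycInterval_iff {b x : ZMod N} {k : ℕ} (h : k < N) :
    x ∈ cycInterval b k ↔ (x - b).val ≤ k := by
  simpa using mem_cycInterval_add_iff (v := b) (x := x) (s := 0) (by omega)

/-- An interval avoiding `W ∋ v` cannot pass through `v`. -/
theorem exists_eq_add_of_disjoint_cycInterval {W : Set (ZMod N)} {v a : ZMod N} {k : ℕ}
    (hv : v ∈ W) (h : Disjoint (cycInterval a k) W) :
    ∃ s : ℕ, 0 < s ∧ s + k < N ∧ a = v + (s : ZMod N) := by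
  obtain ⟨s, hsN, rfl⟩ : ∃ s, s < N ∧ a = v + (s : ZMod N) :=
    ⟨(a - v).val, val_lt _, by rw [natCast_zmod_val, add_sub_cancel]⟩
  refine ⟨s, Nat.pos_of_ne_zero fun h0 => ?_, ?_, rfl⟩
  · exact Set.disjoint_left.1 h ⟨0, Nat.zero_le k, by simp [h0]⟩ hv
  · by_contra hk
    refine Set.disjoint_left.1 h ⟨N - s, by omega, ?_⟩ hv
    rw [add_assoc, ← Nat.cast_add, Nat.add_sub_cancel' hsN.le, natCast_self, add_zero]

theorem compl_cycInterval {a : ZMod N} {k : ℕ} (h : k + 1 < N) :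
    (cycInterval a k)ᶜ = cycInterval (a + ((k + 1 : ℕ) : ZMod N)) (N - k - 2) := by
  set b := a + ((k + 1 : ℕ) : ZMod N)
  have hab : a = b + ((N - k - 1 : ℕ) : ZMod N) := by
    rw [add_assoc, ← Nat.cast_add, show k + 1 + (N - k - 1) = N by omega, natCast_self, add_zero]
  ext x
  have hx := val_lt (x - b)
  rw [Set.mem_compl_iff, hab, mem_cycInterval_add_iff (by omega), mem_cycInterval_iff (by omega)]
  omega

/-- Unrolled at `v`, both intervals become intervals of positions in `[1, N - 1]`, which are either
separated or merge into one. -/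
theorem exists_cycInterval_eq_union_or_disjoint {W : Set (ZMod N)} {v a₁ a₂ : ZMod N}
    {k₁ k₂ : ℕ} (hv : v ∈ W) (h₁ : Disjoint (cycInterval a₁ k₁) W)
    (h₂ : Disjoint (cycInterval a₂ k₂) W) :
    (∃ a k, cycInterval a k = cycInterval a₁ k₁ ∪ cycInterval a₂ k₂) ∨
      Disjoint (cycInterval a₁ k₁) (cycInterval a₂ k₂) := by
  obtain ⟨s₁, -, hs₁, rfl⟩ := exists_eq_add_of_disjoint_cycInterval hv h₁
  obtain ⟨s₂, -, hs₂, rfl⟩ := exists_eq_add_of_disjoint_cycInterval hv h₂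
  by_cases hsep : s₁ + k₁ < s₂ ∨ s₂ + k₂ < s₁
  · refine Or.inr (Set.disjoint_left.2 fun x hx₁ hx₂ => ?_)
    rw [mem_cycInterval_add_iff hs₁] at hx₁
    rw [mem_cycInterval_add_iff hs₂] at hx₂
    omega
  · refine Or.inl ⟨v + ((min s₁ s₂ : ℕ) : ZMod N), max (s₁ + k₁) (s₂ + k₂) - min s₁ s₂, ?_⟩
    ext x
    rw [Set.mem_union, mem_cycInterval_add_iff (by omega), mem_cycInterval_add_iff hs₁,
      mem_cycInterval_add_iff hs₂]
    omega

theorem add_one_lt_of_disjoint_cycInterval {W : Set (ZMod N)} {v a : ZMod N} {k : ℕ}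
    (hv : v ∈ W) (h : Disjoint (cycInterval a k) W) : k + 1 < N := by
  obtain ⟨s, hs, hsk, -⟩ := exists_eq_add_of_disjoint_cycInterval hv h
  omega

end ZMod

open ZMod

theorem stmt14_general (N : ℕ) (hN : 2 ≤ N) (n : ℕ)
    (V : Fin n → Set (ZMod N))
    (hne : ∀ i, (V i).Nonempty)
    (hnoncross : ∀ i j, i ≠ j → InOneComponent N (V i) (V j))
    (ν : Fin n → ℕ)
    (hν : ∀ i : Fin n, IsGreatest
      {m : ℕ | ∃ M : Finset (Fin n), i ∉ M ∧ M.card = m ∧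
        InOneComponent N (V i) (⋃ j ∈ M, V j)} (ν i))
    (i : Fin n) (hi : ν i < n - 1) :
    ∃ i' : Fin n, i' ≠ i ∧ ν i + 1 ≤ ν i' := by
  have : NeZero N := ⟨by omega⟩
  obtain ⟨M, hiM, hMcard, hM⟩ := (hν i).1
  obtain ⟨a₁, k₁, hI₁, hMI₁⟩ := inOneComponent_iff.1 hM
  have hcard : (insert i M).card = ν i + 1 := by rw [Finset.card_insert_of_notMem hiM, hMcard]
  obtain ⟨j, -, hj⟩ := Finset.exists_mem_notMem_of_card_lt_card (s := insert i M)
    (t := Finset.univ) (by simp only [hcard, Finset.card_univ, Fintype.card_fin]; omega)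
  obtain ⟨hji, hjM⟩ := not_or.1 (Finset.mem_insert.not.1 hj)
  obtain ⟨a₂, k₂, hI₂, hjI₂⟩ := inOneComponent_iff.1 (hnoncross i j (Ne.symm hji))
  obtain ⟨v, hv⟩ := hne i
  rcases exists_cycInterval_eq_union_or_disjoint hv hI₁ hI₂ with ⟨a, k, hunion⟩ | hI₁₂
  · have hjM' : InOneComponent N (V i) (⋃ x ∈ insert j M, V x) := by
      refine inOneComponent_iff.2 ⟨a, k, hunion ▸ Set.disjoint_union_left.2 ⟨hI₁, hI₂⟩, ?_⟩
      rw [Finset.set_biUnion_insert, hunion]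
      exact Set.union_subset (hjI₂.trans Set.subset_union_right)
        (hMI₁.trans Set.subset_union_left)
    have := (hν i).2 ⟨insert j M, by simp [Ne.symm hji, hiM],
      by rw [Finset.card_insert_of_notMem hjM, hMcard], hjM'⟩
    omega
  · have hcompl := compl_cycInterval (a := a₂) (add_one_lt_of_disjoint_cycInterval hv hI₂)
    have hiM' : InOneComponent N (V j) (⋃ x ∈ insert i M, V x) := by
      refine inOneComponent_iff.2 ⟨_, _, hcompl ▸ disjoint_compl_left_iff.2 hjI₂, ?_⟩
      rw [← hcompl, Finset.set_biUnion_insert]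
      exact Set.union_subset (Set.subset_compl_iff_disjoint_right.2 hI₂.symm)
        (hMI₁.trans (Set.subset_compl_iff_disjoint_right.2 hI₁₂))
    exact ⟨j, hji, (hν j).2 ⟨insert i M, hj, hcard, hiM'⟩⟩

theorem stmt14 (N : ℕ) (hN : 2 ≤ N) (n : ℕ) (hn : 2 ≤ n)
    (V : Fin n → Set (ZMod N))
    (hne : ∀ i, (V i).Nonempty)
    (hdisj : ∀ i j, i ≠ j → Disjoint (V i) (V j))
    (hnoncross : ∀ i j, i ≠ j → InOneComponent N (V i) (V j))
    (ν : Fin n → ℕ)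
    (hν : ∀ i : Fin n, IsGreatest
      {m : ℕ | ∃ M : Finset (Fin n), i ∉ M ∧ M.card = m ∧
        InOneComponent N (V i) (⋃ j ∈ M, V j)} (ν i))
    (i : Fin n) (hi : ν i < n - 1) :
    ∃ i' : Fin n, i' ≠ i ∧ ν i + 1 ≤ ν i' :=
  stmt14_general N hN n V hne hnoncross ν hν i hi
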